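/- The integral ∫_0^∞ x · log((e^x + 1)/(e^x − 1)) dx converges and equals (7/4)·ζ(3). -/

import Mathlib

open MeasureTheory Real Set

noncomputable def auxF (k : ℕ) (t : ℝ) : ℝ :=
  (2 / (2 * (k : ℝ) + 1)) * (t * Real.exp (-((2 * (k : ℝ) + 1) * t)))

lemma auxc_pos (k : ℕ) : (0:ℝ) < 2 * (k:ℝ) + 1 := by positivity

/-- pointwise series expansion -/
lemma aux_hasSum {t : ℝ} (ht : 0 < t) :
    HasSum (fun k : ℕ => auxF k t)
      (t * Real.log ((Real.exp t + 1) / (Real.exp t - 1))) := by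
  have hx0 : 0 < Real.exp (-t) := Real.exp_pos _
  have hx1 : Real.exp (-t) < 1 := by
    rw [Real.exp_lt_one_iff]; linarith
  have hx : |Real.exp (-t)| < 1 := by rwa [abs_of_pos hx0]
  have h := (Real.hasSum_log_sub_log_of_abs_lt_one hx).mul_left t
  have he1 : (1:ℝ) < Real.exp t := by
    calc (1:ℝ) = Real.exp 0 := Real.exp_zero.symm
    _ < Real.exp t := Real.exp_lt_exp.mpr ht
  have hlog : Real.log (1 + Real.exp (-t)) - Real.log (1 - Real.exp (-t)) =
      Real.log ((Real.exp t + 1) / (Real.exp t - 1)) := by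
    have hdiv : (Real.exp t + 1) / (Real.exp t - 1)
        = (1 + Real.exp (-t)) / (1 - Real.exp (-t)) := by
      rw [Real.exp_neg]
      have h0 : Real.exp t ≠ 0 := (Real.exp_pos t).ne'
      field_simp
    rw [hdiv, Real.log_div (by linarith) (by linarith)]
  rw [hlog] at h
  convert h using 2 with k
  · rfl
  unfold auxF
  have : Real.exp (-t) ^ (2 * k + 1) = Real.exp (-((2 * (k:ℝ) + 1) * t)) := by
    rw [← Real.exp_nat_mul]
    congr 1
    push_cast
    ring
  rw [this]
  ring

lemma aux_integrableOn_base {c : ℝ} (hc : 1 ≤ c) :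
    IntegrableOn (fun t : ℝ => t * Real.exp (-(c * t))) (Ioi 0) := by
  apply integrable_of_isBigO_exp_neg (b := 1/2) (by norm_num)
  · exact (continuous_id.mul (Real.continuous_exp.comp (by continuity))).continuousOn
  · rw [Asymptotics.isBigO_iff]
    refine ⟨2, ?_⟩
    filter_upwards [Filter.eventually_gt_atTop 0] with t ht
    have h1 : Real.exp (-(c * t)) ≤ Real.exp (-((1:ℝ)/2) * t) * Real.exp (-(t/2)) := by
      rw [← Real.exp_add]
      apply Real.exp_le_exp.mpr
      nlinarith
    have h2 : t * Real.exp (-(t/2)) ≤ 2 := by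
      have := Real.add_one_le_exp (t/2)
      have hp : 0 < Real.exp (t/2) := Real.exp_pos _
      rw [Real.exp_neg]
      rw [mul_inv_le_iff₀ hp]
      nlinarith
    have hexp : (0:ℝ) < Real.exp (-((1:ℝ)/2) * t) := Real.exp_pos _
    rw [Real.norm_eq_abs, Real.norm_eq_abs, abs_of_nonneg (by positivity),
      abs_of_nonneg (by positivity)]
    calc t * Real.exp (-(c * t)) ≤ t * (Real.exp (-((1:ℝ)/2) * t) * Real.exp (-(t/2))) := by
          exact mul_le_mul_of_nonneg_left h1 ht.le
      _ = (t * Real.exp (-(t/2))) * Real.exp (-((1:ℝ)/2) * t) := by ring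
      _ ≤ 2 * Real.exp (-((1:ℝ)/2) * t) := by
          exact mul_le_mul_of_nonneg_right h2 hexp.le

lemma aux_integral_base {c : ℝ} (hc : 0 < c) :
    ∫ t in Ioi (0:ℝ), t * Real.exp (-(c * t)) = 1 / c ^ 3 * c := by
  have h := Real.integral_rpow_mul_exp_neg_mul_Ioi (a := 2) (by norm_num) hc
  rw [Real.Gamma_two] at h
  have heq : ∀ t ∈ Ioi (0:ℝ), t ^ ((2:ℝ) - 1) * Real.exp (-(c * t)) =
      t * Real.exp (-(c * t)) := by
    intro t ht
    norm_num
  rw [setIntegral_congr_fun measurableSet_Ioi heq] at h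
  rw [h]
  rw [show ((1:ℝ)/c) ^ (2:ℝ) = (1/c)^(2:ℕ) by
    rw [← Real.rpow_natCast]; norm_num]
  field_simp

lemma aux_integrableOn (k : ℕ) : IntegrableOn (auxF k) (Ioi 0) := by
  unfold auxF
  exact (aux_integrableOn_base (by have := auxc_pos k; linarith [Nat.cast_nonneg (α := ℝ) k])).const_mul _

lemma aux_integral (k : ℕ) :
    ∫ t in Ioi (0:ℝ), auxF k t = 2 / (2 * (k:ℝ) + 1) ^ 3 := by
  unfold auxF
  rw [integral_const_mul, aux_integral_base (auxc_pos k)]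
  have := auxc_pos k
  field_simp

lemma aux_summable : Summable (fun k : ℕ => 2 / (2 * (k:ℝ) + 1) ^ 3) := by
  have h : Summable (fun n : ℕ => 1 / ((n:ℝ) + 1) ^ 3) := by
    have := Real.summable_one_div_nat_pow.mpr (show 1 < 3 by norm_num)
    exact_mod_cast (summable_nat_add_iff 1).mpr this
  apply Summable.of_nonneg_of_le (fun k => by positivity)
    (fun k => ?_) (h.mul_left 2)
  have hk : ((k:ℝ) + 1) ≤ 2 * (k:ℝ) + 1 := by linarith [Nat.cast_nonneg (α := ℝ) k]
  have h1 : (0:ℝ) < ((k:ℝ) + 1) ^ 3 := by positivity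
  have h2 : ((k:ℝ) + 1) ^ 3 ≤ (2 * (k:ℝ) + 1) ^ 3 := by
    apply pow_le_pow_left₀ (by positivity) hk _
  rw [mul_one_div]
  exact div_le_div_of_nonneg_left (by norm_num) h1 h2
lemma aux_nonneg {k : ℕ} {t : ℝ} (ht : 0 < t) : 0 ≤ auxF k t := by
  unfold auxF
  have := auxc_pos k
  positivity

lemma aux_cont (k : ℕ) : Continuous (auxF k) := by
  unfold auxF
  exact continuous_const.mul (continuous_id.mul (Real.continuous_exp.comp (by continuity)))

lemma main_integrable :
    IntegrableOn (fun x : ℝ => x * Real.log ((Real.exp x + 1) / (Real.exp x - 1)))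
      (Set.Ioi 0) := by
  have hgt : ∀ x ∈ Ioi (0:ℝ), 1 < Real.exp x := by
    intro x hx
    calc (1:ℝ) = Real.exp 0 := Real.exp_zero.symm
    _ < Real.exp x := Real.exp_lt_exp.mpr hx
  constructor
  · have h1 : ContinuousOn (fun x : ℝ => (Real.exp x + 1) / (Real.exp x - 1)) (Ioi 0) := by
      apply ContinuousOn.div
        (Real.continuous_exp.continuousOn.add continuousOn_const)
        (Real.continuous_exp.continuousOn.sub continuousOn_const)
      intro x hx
      have := hgt x hx
      intro h; simp only [Pi.sub_apply] at h; linarith [h]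
    have h2 : ContinuousOn
        (fun x : ℝ => x * Real.log ((Real.exp x + 1) / (Real.exp x - 1))) (Ioi 0) := by
      apply continuousOn_id.mul (h1.log ?_)
      intro x hx
      have := hgt x hx
      have hp : 0 < (Real.exp x + 1) / (Real.exp x - 1) := by
        apply div_pos <;> linarith
      exact hp.ne'
    exact h2.aestronglyMeasurable measurableSet_Ioi
  · rw [HasFiniteIntegral]
    have key : ∫⁻ t in Ioi (0:ℝ),
        (‖t * Real.log ((Real.exp t + 1) / (Real.exp t - 1))‖₊ : ENNReal)
        = ∑' k : ℕ, ENNReal.ofReal (∫ t in Ioi (0:ℝ), auxF k t) := by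
      calc ∫⁻ t in Ioi (0:ℝ),
          (‖t * Real.log ((Real.exp t + 1) / (Real.exp t - 1))‖₊ : ENNReal)
          = ∫⁻ t in Ioi (0:ℝ), ∑' k : ℕ, ENNReal.ofReal (auxF k t) := by
            apply setLIntegral_congr_fun measurableSet_Ioi
            intro t ht
            have hs := aux_hasSum ht
            have hnn : 0 ≤ t * Real.log ((Real.exp t + 1) / (Real.exp t - 1)) := by
              rw [← hs.tsum_eq]
              exact tsum_nonneg fun k => aux_nonneg ht
            beta_reduce
            rw [← enorm_eq_nnnorm, ← ofReal_norm, Real.norm_of_nonneg hnn, ← hs.tsum_eq,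
              ENNReal.ofReal_tsum_of_nonneg (fun k => aux_nonneg ht) hs.summable]
        _ = ∑' k : ℕ, ∫⁻ t in Ioi (0:ℝ), ENNReal.ofReal (auxF k t) :=
            lintegral_tsum fun k => ((aux_cont k).measurable.ennreal_ofReal).aemeasurable
        _ = ∑' k : ℕ, ENNReal.ofReal (∫ t in Ioi (0:ℝ), auxF k t) := by
            apply tsum_congr
            intro k
            rw [ofReal_integral_eq_lintegral_ofReal (aux_integrableOn k)]
            filter_upwards [ae_restrict_mem measurableSet_Ioi] with t ht
            exact aux_nonneg ht
    simp_rw [enorm_eq_nnnorm]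
    rw [key]
    have : ∑' k : ℕ, ENNReal.ofReal (∫ t in Ioi (0:ℝ), auxF k t)
        = ENNReal.ofReal (∑' k : ℕ, 2 / (2 * (k:ℝ) + 1) ^ 3) := by
      simp_rw [aux_integral]
      rw [ENNReal.ofReal_tsum_of_nonneg (fun k => by positivity) aux_summable]
    rw [this]
    exact ENNReal.ofReal_lt_top

lemma aux_arith :
    ∑' k : ℕ, 2 / (2 * (k:ℝ) + 1) ^ 3 = 7 / 4 * ∑' n : ℕ, 1 / ((n : ℝ) + 1) ^ 3 := by
  set f : ℕ → ℝ := fun n => 1 / ((n:ℝ) + 1) ^ 3 with hf_def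
  have hf : Summable f := by
    have h0 := Real.summable_one_div_nat_pow.mpr (show 1 < 3 by norm_num)
    have h1 := (summable_nat_add_iff (f := fun n : ℕ => 1 / (n:ℝ) ^ 3) 1).mpr h0
    apply h1.congr
    intro n
    simp [hf_def]
  have he : Summable fun k => f (2 * k) := hf.comp_injective fun a b h => by omega
  have ho : Summable fun k => f (2 * k + 1) := hf.comp_injective fun a b h => by omega
  have hsplit := tsum_even_add_odd he ho
  have hodd : ∑' k : ℕ, f (2 * k + 1) = (1/8) * ∑' k : ℕ, f k := by
    rw [← tsum_mul_left]
    apply tsum_congr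
    intro k
    simp only [hf_def]
    push_cast
    have hk : (0:ℝ) < ((k:ℝ)+1) := by positivity
    field_simp
    ring
  have heven : ∑' k : ℕ, f (2 * k) = (7/8) * ∑' k : ℕ, f k := by linarith
  calc ∑' k : ℕ, 2 / (2 * (k:ℝ) + 1) ^ 3 = ∑' k : ℕ, 2 * f (2 * k) := by
        apply tsum_congr
        intro k
        simp only [hf_def]
        push_cast
        ring
    _ = 2 * ∑' k : ℕ, f (2 * k) := tsum_mul_left
    _ = 7 / 4 * ∑' n : ℕ, f n := by rw [heven]; ring
/-- `∫_0^∞ x·log((e^x+1)/(e^x−1)) dx` converges and equals `(7/4)·ζ(3)`. -/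
theorem integral_x_log_eq :
    IntegrableOn (fun x : ℝ => x * Real.log ((Real.exp x + 1) / (Real.exp x - 1)))
        (Set.Ioi 0) ∧
    ∫ x in Set.Ioi (0 : ℝ), x * Real.log ((Real.exp x + 1) / (Real.exp x - 1)) =
      7 / 4 * ∑' n : ℕ, 1 / ((n : ℝ) + 1) ^ 3 := by
  refine ⟨main_integrable, ?_⟩
  have hnorm : Summable fun k : ℕ => ∫ t in Ioi (0:ℝ), ‖auxF k t‖ := by
    apply aux_summable.congr
    intro k
    rw [← aux_integral k]
    apply setIntegral_congr_fun measurableSet_Ioi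
    intro t ht
    exact (Real.norm_of_nonneg (aux_nonneg ht)).symm
  have hs := hasSum_integral_of_summable_integral_norm
    (μ := volume.restrict (Ioi 0)) (F := auxF) (fun k => aux_integrableOn k) hnorm
  have h1 : (∫ t in Ioi (0:ℝ), ∑' k : ℕ, auxF k t)
      = ∫ x in Set.Ioi (0:ℝ), x * Real.log ((Real.exp x + 1) / (Real.exp x - 1)) :=
    setIntegral_congr_fun measurableSet_Ioi fun t ht => (aux_hasSum ht).tsum_eq
  rw [h1] at hs
  rw [← hs.tsum_eq, ← aux_arith]
  exact tsum_congr fun k => aux_integral k
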